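/- Let G = (V,E) be a graph on n vertices with stabilizer generators g_i = X_i ∏_{k ∈ N(i)} Z_k, and for a ∈ {0,1}^n let P_a = ∏_{i=1}^n ((−1)^{a_i} g_i + 𝟙)/2. Fix a qubit k. Then (P_a + Z_k P_a Z_k)^{T_k} = P_a + Z_k P_a Z_k, i.e., the sum of the projector onto a graph-basis vector and the projector onto the same vector with bit k flipped is invariant under partial transposition on qubit k. -/
import Mathlib


open Matrix Finset ComplexOrder

/-- Operators on `(ℂ²)^{⊗n}`, indexed by bit strings `{0,1}^n`. -/
abbrev QMat (n : ℕ) := Matrix (Fin n → Fin 2) (Fin n → Fin 2) ℂ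

/-- The tensor product `A 0 ⊗ ⋯ ⊗ A (n-1)` of one-qubit operators. -/
def qtensor {n : ℕ} (A : Fin n → Matrix (Fin 2) (Fin 2) ℂ) : QMat n :=
  fun v w => ∏ a, A a (v a) (w a)

def PX : Matrix (Fin 2) (Fin 2) ℂ := !![0, 1; 1, 0]

def PZ : Matrix (Fin 2) (Fin 2) ℂ := !![1, 0; 0, -1]

/-- Partial transpose on the qubits in `M`. -/
def qpt {n : ℕ} (M : Finset (Fin n)) (X : QMat n) : QMat n :=
  fun v w => X (fun a => if a ∈ M then w a else v a) (fun a => if a ∈ M then v a else w a)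

/-- The stabilizer generator `g_i = X_i ∏_{k ∈ N(i)} Z_k` of the graph `G`. -/
def gGen {n : ℕ} (G : SimpleGraph (Fin n)) [DecidableRel G.Adj] (i : Fin n) : QMat n :=
  qtensor (fun a => if a = i then PX else if G.Adj i a then PZ else 1)

/-- The projector `P_a = ∏_i ((−1)^{a_i} g_i + 𝟙)/2` onto the graph-basis vector `a`. -/
noncomputable def gBasisProj {n : ℕ} (G : SimpleGraph (Fin n)) [DecidableRel G.Adj]
    (a : Fin n → Fin 2) : QMat n :=
  ((List.finRange n).map (fun i => (2 : ℂ)⁻¹ • ((-1 : ℂ) ^ (a i : ℕ) • gGen G i + 1))).prod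

/-- The Pauli operator `Z_k` acting on qubit `k`. -/
def Zop {n : ℕ} (k : Fin n) : QMat n :=
  qtensor (fun a => if a = k then PZ else 1)

lemma Zop_eq_diagonal {n : ℕ} (k : Fin n) :
    Zop k = Matrix.diagonal (fun v : Fin n → Fin 2 => (-1 : ℂ) ^ (v k : ℕ)) := by
  ext v w
  simp only [Zop, qtensor, Matrix.diagonal_apply]
  by_cases h : v = w
  · subst h
    simp only [if_pos rfl]
    rw [Finset.prod_eq_single k]
    · simp only [if_pos rfl]
      rcases (by omega : v k = 0 ∨ v k = 1) with h1 | h1 <;> simp [h1, PZ]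
    · intro b _ hb; simp [hb, Matrix.one_apply]
    · intro hk; exact absurd (Finset.mem_univ k) hk
  · rw [if_neg h]
    obtain ⟨b, hb⟩ : ∃ b, v b ≠ w b := by
      by_contra hc; push_neg at hc; exact h (funext hc)
    apply Finset.prod_eq_zero (Finset.mem_univ b)
    by_cases hbk : b = k
    · subst hbk
      simp only [if_pos rfl]
      rcases (by omega : v b = 0 ∨ v b = 1) with h1 | h1 <;>
        rcases (by omega : w b = 0 ∨ w b = 1) with h2 | h2 <;>
        simp_all [PZ]
    · simp [hbk, Matrix.one_apply_ne hb]

/-- `P_a + Z_k P_a Z_k` is invariant under partial transposition on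
qubit `k` (note `Z_k P_a Z_k` is the projector onto the graph-basis vector with the
`k`-th label bit flipped). -/
theorem graph_proj_plus_bitflip_invariant_qpt
    {n : ℕ} (G : SimpleGraph (Fin n)) [DecidableRel G.Adj]
    (a : Fin n → Fin 2) (k : Fin n) :
    qpt {k} (gBasisProj G a + Zop k * gBasisProj G a * Zop k)
      = gBasisProj G a + Zop k * gBasisProj G a * Zop k := by
  have hZ := Zop_eq_diagonal (n := n) k
  set P := gBasisProj G a with hP
  ext v w
  simp only [qpt, hZ, Matrix.add_apply, Matrix.diagonal_mul, Matrix.mul_diagonal,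
    Finset.mem_singleton, if_pos rfl, if_true]
  by_cases h : v k = w k
  · have hv : (fun b => if b = k then w b else v b) = v := by
      funext b; by_cases hb : b = k <;> simp [hb, h.symm]
    have hw : (fun b => if b = k then v b else w b) = w := by
      funext b; by_cases hb : b = k <;> simp [hb, h]
    rw [hv, hw, h]
  · have key : ∀ x y : Fin n → Fin 2, x k ≠ y k →
        P x y + (-1:ℂ) ^ (x k : ℕ) * P x y * (-1:ℂ) ^ (y k : ℕ) = 0 := by
      intro x y hxy
      rcases (by omega : x k = 0 ∨ x k = 1) with h1 | h1 <;>
        rcases (by omega : y k = 0 ∨ y k = 1) with h2 | h2 <;>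
        simp_all
    set v' : Fin n → Fin 2 := fun b => if b = k then w b else v b with hv'
    set w' : Fin n → Fin 2 := fun b => if b = k then v b else w b with hw'
    have h1 : v' k = w k := by simp [hv']
    have h2 : w' k = v k := by simp [hw']
    have e1 := key v' w' (by rw [h1, h2]; exact Ne.symm h)
    rw [h1, h2] at e1
    rw [e1, key v w h]
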